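/- arXiv:2301.12628 — 7 statements merged into one kernel-verified Lean document; each statement's English description precedes it below -/
import Mathlib

section
/- Let u, v > 0 be real numbers and define the cubic polynomial T₁(x) = u·v²·x³ − 2·u·v²·x² + (u·v² + u·v)·x − u·v + 1. A pair of real numbers (x, y) satisfies the equilibrium equations x = u·y·(1−y) and y = v·x·(1−x) if and only if either (x, y) = (0, 0), or T₁(x) = 0 and y = v·x·(1−x). -/
/-- Triangular decomposition of the equilibrium equations of Kopel's model. -/
theorem kopel_equilibrium_decomposition
    (u v x y : ℝ) (hu : 0 < u) (hv : 0 < v) :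
    (x = u * y * (1 - y) ∧ y = v * x * (1 - x)) ↔
      ((x, y) = ((0 : ℝ), (0 : ℝ)) ∨
        (u * v ^ 2 * x ^ 3 - 2 * u * v ^ 2 * x ^ 2 + (u * v ^ 2 + u * v) * x - u * v + 1 = 0 ∧
          y = v * x * (1 - x))) := by
  constructor
  · rintro ⟨hx, hy⟩
    by_cases h : x = 0
    · left
      subst h
      simp only [mul_zero, zero_mul] at hy
      simp [hy]
    · right
      refine ⟨?_, hy⟩
      subst hy
      have key : x * (u * v ^ 2 * x ^ 3 - 2 * u * v ^ 2 * x ^ 2 + (u * v ^ 2 + u * v) * x - u * v + 1) = 0 := by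
        linear_combination hx
      rcases mul_eq_zero.mp key with h' | h'
      · exact absurd h' h
      · exact h'
  · rintro (h | ⟨hT, hy⟩)
    · simp only [Prod.mk.injEq] at h
      obtain ⟨hx, hy⟩ := h
      subst hx; subst hy
      constructor <;> ring
    · refine ⟨?_, hy⟩
      subst hy
      linear_combination x * hT
end

section
/- Let u, v > 0 be real numbers with u·v > 1, and define T₁(x) = u·v²·x³ − 2·u·v²·x² + (u·v² + u·v)·x − u·v + 1. Then every real root x of T₁ satisfies 0 < x < 1. -/
/-- If u·v > 1, every real root of T₁ lies in (0, 1). -/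
theorem kopel_T1_root_mem_Ioo
    (u v : ℝ) (hu : 0 < u) (hv : 0 < v) (huv : 1 < u * v) (x : ℝ)
    (hx : u * v ^ 2 * x ^ 3 - 2 * u * v ^ 2 * x ^ 2 + (u * v ^ 2 + u * v) * x - u * v + 1 = 0) :
    0 < x ∧ x < 1 := by
  have huv2 : 0 < u * v ^ 2 := by positivity
  constructor
  · by_contra h
    push_neg at h
    nlinarith [mul_nonneg (mul_nonneg huv2.le (neg_nonneg.2 h)) (sq_nonneg x),
      mul_nonneg huv2.le (sq_nonneg x), mul_pos hu hv,
      mul_nonneg (mul_pos hu hv).le (neg_nonneg.2 h)]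
  · by_contra h
    push_neg at h
    nlinarith [mul_nonneg (mul_nonneg huv2.le (sub_nonneg.2 h)) (sq_nonneg (x - 1)),
      mul_nonneg (mul_pos hu hv).le (sub_nonneg.2 h)]
end

section
/- Let u, v > 0 be real numbers with u·v ≥ 1. Then every equilibrium of Kopel's duopoly model lies in the unit square: if real numbers (x, y) satisfy x = u·y·(1−y) and y = v·x·(1−x), then 0 ≤ x ≤ 1 and 0 ≤ y ≤ 1. -/
/-- If u·v ≥ 1, all equilibria of Kopel's model lie in the unit square. -/
theorem kopel_equilibria_in_unit_square
    (u v x y : ℝ) (hu : 0 < u) (hv : 0 < v) (huv : 1 ≤ u * v)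
    (hx : x = u * y * (1 - y)) (hy : y = v * x * (1 - x)) :
    (0 ≤ x ∧ x ≤ 1) ∧ (0 ≤ y ∧ y ≤ 1) := by
  have hy1 : y ≤ 1 := by
    by_contra h; push_neg at h
    have hxneg : x < 0 := hx ▸ mul_neg_of_pos_of_neg
      (mul_pos hu (by linarith)) (by linarith)
    have hyneg : y < 0 := hy ▸ mul_neg_of_neg_of_pos
      (mul_neg_of_pos_of_neg hv hxneg) (by linarith)
    linarith
  have hx1 : x ≤ 1 := by
    by_contra h; push_neg at h
    have hyneg : y < 0 := hy ▸ mul_neg_of_pos_of_neg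
      (mul_pos hv (by linarith)) (by linarith)
    have hxneg : x < 0 := hx ▸ mul_neg_of_neg_of_pos
      (mul_neg_of_pos_of_neg hu hyneg) (by linarith)
    linarith
  have hy0 : 0 ≤ y := by
    by_contra h; push_neg at h
    have hxneg : x < 0 := hx ▸ mul_neg_of_neg_of_pos
      (mul_neg_of_pos_of_neg hu h) (by linarith)
    have h1 : x * y = (u * y * (1 - y)) * (v * x * (1 - x)) :=
      congrArg₂ (· * ·) hx hy
    have h3 : 0 < x * y := mul_pos_of_neg_of_neg hxneg h
    have h2 : (1 : ℝ) < (1 - x) * (1 - y) := by nlinarith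
    nlinarith [mul_pos h3 (by linarith : (0:ℝ) < (1 - x) * (1 - y)),
      mul_lt_mul_of_pos_right h2 h3]
  have hx0 : 0 ≤ x := hx ▸ mul_nonneg (mul_nonneg hu.le hy0) (by linarith)
  exact ⟨⟨hx0, hx1⟩, ⟨hy0, hy1⟩⟩
end

section
/- Let u, v > 0 be real numbers and set R₁ = u²·v² − 4·u²·v − 4·u·v² + 18·u·v − 27. If R₁ > 0, then the set of positive equilibria of Kopel's duopoly model, i.e. the set { (x, y) ∈ ℝ² : x > 0, y > 0, x = u·y·(1−y), y = v·x·(1−x) }, has exactly three elements. -/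
/-!
Eliminating `y = v x (1 - x)`, the positive equilibria correspond to the roots in `(0, 1)` of a
cubic `F` in `x`, with `F 0 = 1 - u v < 0` and `F 1 = 1`. Writing `w = √(v² - 3v)`, the critical
points of `F` are `(2v ∓ w) / (3v)`; the product of the two critical values is a negative multiple
of `R₁`, and the first exceeds the second, so `F` changes sign three times on `[0, 1]`. The three
roots found by the intermediate value theorem are all the roots of the cubic.
-/

open Polynomial Set

theorem exists_three_zeros_of_sign_changes {f : ℝ → ℝ} {a b c d : ℝ}
    (hf : ContinuousOn f (Icc a d)) (hab : a ≤ b) (hbc : b ≤ c) (hcd : c ≤ d)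
    (ha : f a < 0) (hb : 0 < f b) (hc : f c < 0) (hd : 0 < f d) :
    ∃ r₁ ∈ Ioo a b, ∃ r₂ ∈ Ioo b c, ∃ r₃ ∈ Ioo c d, f r₁ = 0 ∧ f r₂ = 0 ∧ f r₃ = 0 := by
  obtain ⟨r₁, hr₁, hfr₁⟩ :=
    intermediate_value_Ioo hab (hf.mono (Icc_subset_Icc le_rfl (hbc.trans hcd))) ⟨ha, hb⟩
  obtain ⟨r₂, hr₂, hfr₂⟩ :=
    intermediate_value_Ioo' hbc (hf.mono (Icc_subset_Icc hab hcd)) ⟨hc, hb⟩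
  obtain ⟨r₃, hr₃, hfr₃⟩ :=
    intermediate_value_Ioo hcd (hf.mono (Icc_subset_Icc (hab.trans hbc) le_rfl)) ⟨hc, hd⟩
  exact ⟨r₁, hr₁, r₂, hr₂, r₃, hr₃, hfr₁, hfr₂, hfr₃⟩

theorem Polynomial.mem_of_isRoot_of_natDegree_le_card {R : Type*} [CommRing R] [IsDomain R]
    [DecidableEq R] {p : R[X]} (hp : p ≠ 0) {s : Finset R} (hs : ∀ x ∈ s, p.IsRoot x)
    (hcard : p.natDegree ≤ s.card) {x : R} (hx : p.IsRoot x) : x ∈ s := by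
  have hsub : s ⊆ p.roots.toFinset := fun y hy =>
    Multiset.mem_toFinset.mpr ((mem_roots hp).mpr (hs y hy))
  have hroots : p.roots.toFinset.card ≤ s.card :=
    (Multiset.toFinset_card_le _).trans ((card_roots' p).trans hcard)
  rw [Finset.eq_of_subset_of_card_le hsub hroots]
  exact Multiset.mem_toFinset.mpr ((mem_roots hp).mpr hx)

namespace Kopel

def R₁ (u v : ℝ) : ℝ := u ^ 2 * v ^ 2 - 4 * u ^ 2 * v - 4 * u * v ^ 2 + 18 * u * v - 27

theorem R₁_comm (u v : ℝ) : R₁ u v = R₁ v u := by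
  unfold R₁; ring

theorem three_lt_of_R₁_pos {u v : ℝ} (hv : 0 < v) (hR : 0 < R₁ u v) : 3 < v := by
  by_contra! h
  -- `R₁` is a quadratic in `u`; completing the square gives
  -- `4 (v - 4) R₁ = v (2 (v - 4) u + 18 - 4 v)² + 16 (3 - v)³`.
  have hsq : 0 ≤ v * (2 * (v - 4) * u + 18 - 4 * v) ^ 2 := by positivity
  have hcube : 0 ≤ (3 - v) ^ 3 := pow_nonneg (by linarith) 3
  unfold R₁ at hR
  nlinarith

noncomputable def cubic (u v : ℝ) : ℝ[X] :=
  C (u * v ^ 2) * X ^ 3 - C (2 * u * v ^ 2) * X ^ 2 + C (u * v * (v + 1)) * X + C (1 - u * v)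

theorem eval_cubic (u v x : ℝ) :
    (cubic u v).eval x =
      u * v ^ 2 * x ^ 3 - 2 * u * v ^ 2 * x ^ 2 + u * v * (v + 1) * x + (1 - u * v) := by
  simp [cubic]

theorem sub_eq_mul_eval_cubic (u v x : ℝ) :
    x - u * (v * x * (1 - x)) * (1 - v * x * (1 - x)) = x * (cubic u v).eval x := by
  rw [eval_cubic]; ring

theorem natDegree_cubic_le (u v : ℝ) : (cubic u v).natDegree ≤ 3 := by
  unfold cubic; compute_degree

theorem eval_zero_cubic (u v : ℝ) : (cubic u v).eval 0 = 1 - u * v := by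
  rw [eval_cubic]; ring

theorem eval_one_cubic (u v : ℝ) : (cubic u v).eval 1 = 1 := by
  rw [eval_cubic]; ring

theorem cubic_ne_zero (u v : ℝ) : cubic u v ≠ 0 := fun h => by
  simpa [h] using eval_one_cubic u v

theorem eval_cubic_critical {u v w : ℝ} (hv : v ≠ 0) (hw : w ^ 2 = v ^ 2 - 3 * v) :
    27 * v ^ 3 * (cubic u v).eval ((2 * v + w) / (3 * v)) =
      2 * u * v ^ 5 - 9 * u * v ^ 4 + 27 * v ^ 3 - 2 * u * v ^ 3 * (v - 3) * w := by
  rw [eval_cubic]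
  field_simp
  linear_combination 27 * u * w * hw

theorem exists_eval_cubic_pos_neg {u v : ℝ} (hu : 0 < u) (hv : 0 < v) (hR : 0 < R₁ u v) :
    ∃ c₁ c₂, 0 ≤ c₁ ∧ c₁ ≤ c₂ ∧ c₂ ≤ 1 ∧ 0 < (cubic u v).eval c₁ ∧ (cubic u v).eval c₂ < 0 := by
  have hv3 := three_lt_of_R₁_pos hv hR
  set w := √(v ^ 2 - 3 * v)
  have hw2 : w ^ 2 = v ^ 2 - 3 * v := Real.sq_sqrt (by nlinarith)
  have hw : 0 < w := Real.sqrt_pos.mpr (by nlinarith)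
  have hwv : w < v := by nlinarith
  have hneg := eval_cubic_critical (u := u) hv.ne' (w := -w) (by rw [neg_sq, hw2])
  have hpos := eval_cubic_critical (u := u) hv.ne' hw2
  set F₁ := (cubic u v).eval ((2 * v + -w) / (3 * v))
  set F₂ := (cubic u v).eval ((2 * v + w) / (3 * v))
  have hprod : (27 * v ^ 3 * F₁) * (27 * v ^ 3 * F₂) < 0 := by
    have : (27 * v ^ 3 * F₁) * (27 * v ^ 3 * F₂) = -(27 * v ^ 6 * R₁ u v) := by
      rw [hneg, hpos, R₁]
      linear_combination (-(2 * u * v ^ 3 * (v - 3)) ^ 2) * hw2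
    rw [this]
    have := pow_pos hv 6
    nlinarith
  have hlt : 27 * v ^ 3 * F₂ < 27 * v ^ 3 * F₁ := by
    rw [hneg, hpos]
    have : 0 < u * v ^ 3 * (v - 3) * w := by have := sub_pos.mpr hv3; positivity
    linarith
  have hv27 : 0 < 27 * v ^ 3 := by positivity
  obtain ⟨hF₁, hF₂⟩ : 0 < 27 * v ^ 3 * F₁ ∧ 27 * v ^ 3 * F₂ < 0 := by
    rcases mul_neg_iff.mp hprod with h | h
    · exact h
    · exact absurd hlt (by linarith)
  refine ⟨_, _, ?_, ?_, ?_, pos_of_mul_pos_right hF₁ hv27.le,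
    neg_of_mul_neg_right hF₂ hv27.le⟩
  · exact div_nonneg (by linarith) (by positivity)
  · gcongr; linarith
  · rw [div_le_one (by positivity)]; linarith

theorem encard_roots_cubic_Ioo {u v : ℝ} (hu : 0 < u) (hv : 0 < v) (hR : 0 < R₁ u v) :
    {x | 0 < x ∧ x < 1 ∧ (cubic u v).IsRoot x}.encard = 3 := by
  obtain ⟨c₁, c₂, h0c₁, hc₁c₂, hc₂1, hFc₁, hFc₂⟩ := exists_eval_cubic_pos_neg hu hv hR
  have huv : 1 < u * v := by
    have := three_lt_of_R₁_pos hu (R₁_comm u v ▸ hR)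
    have := three_lt_of_R₁_pos hv hR
    nlinarith
  obtain ⟨r₁, ⟨hr₁0, hr₁c₁⟩, r₂, ⟨hc₁r₂, hr₂c₂⟩, r₃, ⟨hc₂r₃, hr₃1⟩, h₁, h₂, h₃⟩ :=
    exists_three_zeros_of_sign_changes (cubic u v).continuous.continuousOn h0c₁ hc₁c₂ hc₂1
      (by rw [eval_zero_cubic]; linarith) hFc₁ hFc₂ (by rw [eval_one_cubic]; exact one_pos)
  have hroot : ∀ x, (cubic u v).IsRoot x → x ∈ ({r₁, r₂, r₃} : Finset ℝ) :=
    fun x => mem_of_isRoot_of_natDegree_le_card (cubic_ne_zero u v)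
      (by simp only [Finset.mem_insert, Finset.mem_singleton, forall_eq_or_imp, forall_eq]
          exact ⟨h₁, h₂, h₃⟩)
      ((natDegree_cubic_le u v).trans_eq
        (Finset.card_eq_three.mpr ⟨r₁, r₂, r₃, by linarith, by linarith, by linarith, rfl⟩).symm)
  refine encard_eq_three.mpr ⟨r₁, r₂, r₃, by linarith, by linarith, by linarith, ?_⟩
  ext x
  simp only [mem_ofPred_eq, mem_insert_iff, mem_singleton_iff]
  constructor
  · rintro ⟨-, -, hx⟩
    simpa using hroot x hx
  · rintro (rfl | rfl | rfl)
    exacts [⟨hr₁0, by linarith, h₁⟩, ⟨by linarith, by linarith, h₂⟩,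
      ⟨by linarith, by linarith, h₃⟩]

theorem positiveEquilibria_eq_image (u : ℝ) {v : ℝ} (hv : 0 < v) :
    {p : ℝ × ℝ | 0 < p.1 ∧ 0 < p.2 ∧
      p.1 = u * p.2 * (1 - p.2) ∧ p.2 = v * p.1 * (1 - p.1)} =
      (fun x => (x, v * x * (1 - x))) '' {x | 0 < x ∧ x < 1 ∧ (cubic u v).IsRoot x} := by
  ext ⟨x, y⟩
  simp only [mem_ofPred_eq, mem_image, Prod.mk.injEq]
  constructor
  · rintro ⟨hx, hy, hxy, rfl⟩
    have hx1 : x < 1 := by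
      have := pos_of_mul_pos_right hy (mul_pos hv hx).le
      linarith
    have hmul : x * (cubic u v).eval x = 0 := by
      rw [← sub_eq_mul_eval_cubic]; linarith
    exact ⟨x, ⟨hx, hx1, (mul_eq_zero.mp hmul).resolve_left hx.ne'⟩, rfl, rfl⟩
  · rintro ⟨x, ⟨hx, hx1, hroot⟩, rfl, rfl⟩
    have := sub_eq_mul_eval_cubic u v x
    rw [hroot.eq_zero, mul_zero] at this
    exact ⟨hx, mul_pos (mul_pos hv hx) (by linarith), by linarith, rfl⟩

end Kopel

/-- If R₁ > 0, Kopel's model has exactly three positive equilibria. -/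
theorem kopel_three_positive_equilibria
    (u v : ℝ) (hu : 0 < u) (hv : 0 < v)
    (hR1 : 0 < u ^ 2 * v ^ 2 - 4 * u ^ 2 * v - 4 * u * v ^ 2 + 18 * u * v - 27) :
    {p : ℝ × ℝ | 0 < p.1 ∧ 0 < p.2 ∧
      p.1 = u * p.2 * (1 - p.2) ∧ p.2 = v * p.1 * (1 - p.1)}.encard = 3 := by
  have hinj : Function.Injective fun x : ℝ => (x, v * x * (1 - x)) :=
    fun _ _ h => congrArg Prod.fst h
  rw [Kopel.positiveEquilibria_eq_image u hv, hinj.encard_image]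
  exact Kopel.encard_roots_cubic_Ioo hu hv hR1
end

section
/- Let u, v > 0 be real numbers and set R₁ = u²·v² − 4·u²·v − 4·u·v² + 18·u·v − 27. If R₁ < 0 and u·v > 1, then the set of positive equilibria of Kopel's duopoly model, i.e. the set { (x, y) ∈ ℝ² : x > 0, y > 0, x = u·y·(1−y), y = v·x·(1−x) }, has exactly one element. -/
/-- Uniqueness of roots of the cubic `u*v*(1-x)*(v*x^2-v*x+1) - 1` when R₁ < 0. -/
lemma kopel_cubic_unique_root
    (u v : ℝ) (hu : 0 < u) (hv : 0 < v)
    (hR1 : u ^ 2 * v ^ 2 - 4 * u ^ 2 * v - 4 * u * v ^ 2 + 18 * u * v - 27 < 0)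
    (a b : ℝ) (hPa : u * v * (1 - a) * (v * a ^ 2 - v * a + 1) - 1 = 0)
    (hPb : u * v * (1 - b) * (v * b ^ 2 - v * b + 1) - 1 = 0) : a = b := by
  by_contra hab
  have hab' : a - b ≠ 0 := sub_ne_zero.mpr hab
  have hba' : b - a ≠ 0 := sub_ne_zero.mpr fun h => hab h.symm
  have huvne : -(u * v) ≠ 0 := by
    have : 0 < u * v := mul_pos hu hv
    simp [ne_of_gt this]
  have hE1 : v * (a ^ 2 + a * b + b ^ 2) - 2 * v * (a + b) + v + 1 = 0 := by
    have h : (a - b) * (-(u * v)) * (v * (a ^ 2 + a * b + b ^ 2) - 2 * v * (a + b) + v + 1)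
        = (a - b) * (-(u * v)) * 0 := by linear_combination hPa - hPb
    exact mul_left_cancel₀ (mul_ne_zero hab' huvne) h
  have hE2 : u * v ^ 2 * (a * b) * (a + b - 2) + u * v - 1 = 0 := by
    have h : (b - a) * (u * v ^ 2 * (a * b) * (a + b - 2) + u * v - 1)
        = (b - a) * 0 := by linear_combination b * hPa - a * hPb
    exact mul_left_cancel₀ hba' h
  have hscale : (u ^ 4 * v ^ 15 : ℝ) ≠ 0 := by positivity
  have h1 : (u * v ^ 2) ^ 4 * (a - b) ^ 2 *
        ((2 - a - b) ^ 2 - (a + b) * (2 - a - b) + a * b) ^ 2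
      = u ^ 2 * v ^ 4 * (u ^ 2 * v ^ 2 - 4 * u ^ 2 * v - 4 * u * v ^ 2 + 18 * u * v - 27) := by
    apply mul_left_cancel₀ hscale
    linear_combination
      (4*u^8*v^22*(a+b)^4 + (-16)*u^8*v^22*(a+b)^3 + 19*u^8*v^22*(a+b)^2*(a*b) + 16*u^8*v^22*(a+b)^2 + (-56)*u^8*v^22*(a+b)*(a*b) + 4*u^8*v^22*(a*b)^2 + 36*u^8*v^22*(a*b) + (-4)*u^8*v^21*(a+b)^2 + 35*u^8*v^21*(a+b) + 4*u^8*v^21*(a*b) + (-50)*u^8*v^21 + 4*u^8*v^20 + (-27)*u^7*v^20*(a+b) + 54*u^7*v^20) * hE1 +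
      ((-27)*u^7*v^21*(a+b)^3 + 108*u^7*v^21*(a+b)^2 + (-135)*u^7*v^21*(a+b) + 50*u^7*v^21 + (-27)*u^7*v^20*(a+b) + 45*u^7*v^20 + (-27)*u^6*v^19) * hE2
  have hL : 0 ≤ (u * v ^ 2) ^ 4 * (a - b) ^ 2 *
      ((2 - a - b) ^ 2 - (a + b) * (2 - a - b) + a * b) ^ 2 := by positivity
  have hRneg : u ^ 2 * v ^ 4 *
      (u ^ 2 * v ^ 2 - 4 * u ^ 2 * v - 4 * u * v ^ 2 + 18 * u * v - 27) < 0 :=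
    mul_neg_of_pos_of_neg (by positivity) hR1
  -- need strictness: (a-b)^2 > 0 so LHS > 0 unless square factor 0, but even ≥ 0 suffices
  linarith [h1 ▸ hL]

/-- If R₁ < 0 and u·v > 1, Kopel's model has exactly one positive equilibrium. -/
theorem kopel_one_positive_equilibrium
    (u v : ℝ) (hu : 0 < u) (hv : 0 < v)
    (hR1 : u ^ 2 * v ^ 2 - 4 * u ^ 2 * v - 4 * u * v ^ 2 + 18 * u * v - 27 < 0)
    (huv : 1 < u * v) :
    {p : ℝ × ℝ | 0 < p.1 ∧ 0 < p.2 ∧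
      p.1 = u * p.2 * (1 - p.2) ∧ p.2 = v * p.1 * (1 - p.1)}.encard = 1 := by
  set g : ℝ → ℝ := fun x => u * v * (1 - x) * (v * x ^ 2 - v * x + 1) - 1 with hg
  have hgc : ContinuousOn g (Set.Icc (0:ℝ) 1) := by
    apply Continuous.continuousOn; fun_prop
  have hg0 : g 1 < 0 := by simp [hg]
  have hg1 : (0:ℝ) < g 0 := by simp [hg]; linarith
  obtain ⟨x₀, hx₀mem, hgx₀⟩ : ∃ x₀ ∈ Set.Ioo (0:ℝ) 1, g x₀ = 0 := by
    have := intermediate_value_Ioo' (le_of_lt one_pos) hgc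
    have h0 : (0:ℝ) ∈ Set.Ioo (g 1) (g 0) := ⟨hg0, hg1⟩
    obtain ⟨x₀, hx₀, hx₀e⟩ := this h0
    exact ⟨x₀, hx₀, hx₀e⟩
  obtain ⟨hx₀0, hx₀1⟩ := hx₀mem
  have hgx₀' : u * v * (1 - x₀) * (v * x₀ ^ 2 - v * x₀ + 1) - 1 = 0 := hgx₀
  have hy₀ : 0 < v * x₀ * (1 - x₀) := by
    apply mul_pos (mul_pos hv hx₀0); linarith
  have hset : {p : ℝ × ℝ | 0 < p.1 ∧ 0 < p.2 ∧
      p.1 = u * p.2 * (1 - p.2) ∧ p.2 = v * p.1 * (1 - p.1)}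
      = {(x₀, v * x₀ * (1 - x₀))} := by
    ext ⟨x, y⟩
    simp only [Set.mem_setOf_eq, Set.mem_singleton_iff, Prod.mk.injEq]
    constructor
    · rintro ⟨hx, hy, hxe, hye⟩
      have hgx : x * (u * v * (1 - x) * (v * x ^ 2 - v * x + 1) - 1) = 0 := by
        linear_combination (-1 : ℝ) * hxe + (u * (2 * y - 1) - u * (y - v * x * (1 - x))) * hye
      have hgx0 : u * v * (1 - x) * (v * x ^ 2 - v * x + 1) - 1 = 0 := by
        rcases mul_eq_zero.mp hgx with h | h
        · exact absurd h (ne_of_gt hx)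
        · exact h
      have hxx : x = x₀ := kopel_cubic_unique_root u v hu hv hR1 x x₀ hgx0 hgx₀'
      subst hxx
      exact ⟨rfl, by rw [hye]⟩
    · rintro ⟨hxx, hyy⟩
      have key : x₀ = u * (v * x₀ * (1 - x₀)) * (1 - v * x₀ * (1 - x₀)) := by
        linear_combination (-x₀) * hgx₀'
      refine ⟨by rw [hxx]; exact hx₀0, by rw [hyy]; exact hy₀, ?_, ?_⟩
      · rw [hxx, hyy]; exact key
      · rw [hyy, hxx]
  rw [hset, Set.encard_singleton]
end

section
/- For u = v = 3, the point (2/3, 2/3) is the unique positive equilibrium of Kopel's duopoly model: a pair of real numbers (x, y) with x > 0 and y > 0 satisfies x = 3·y·(1−y) and y = 3·x·(1−x) if and only if (x, y) = (2/3, 2/3). -/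
/-- For u = v = 3, (2/3, 2/3) is the unique positive equilibrium of Kopel's model. -/
theorem kopel_unique_positive_equilibrium_three
    (x y : ℝ) :
    (0 < x ∧ 0 < y ∧ x = 3 * y * (1 - y) ∧ y = 3 * x * (1 - x)) ↔
      (x, y) = ((2 / 3 : ℝ), (2 / 3 : ℝ)) := by
  constructor
  · rintro ⟨hx, hy, h1, h2⟩
    have hfact : (x - y) * (4 - 3 * (x + y)) = 0 := by nlinarith [h1, h2]
    have hxy : x = y ∨ x + y = 4 / 3 := by
      rcases mul_eq_zero.mp hfact with h | h
      · left; linarith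
      · right; linarith
    have hx23 : x = 2 / 3 := by
      rcases hxy with h | h
      · have : (3 * x - 2) * x = 0 := by nlinarith
        rcases mul_eq_zero.mp this with h' | h'
        · linarith
        · linarith
      · have : (3 * x - 2) ^ 2 = 0 := by nlinarith
        have := pow_eq_zero_iff (n := 2) (by norm_num) |>.mp this
        linarith
    have hy23 : y = 2 / 3 := by nlinarith [hx23]
    simp [hx23, hy23]
  · rintro h
    have hx : x = 2 / 3 := by simpa using congrArg Prod.fst h
    have hy : y = 2 / 3 := by simpa using congrArg Prod.snd h
    subst hx hy
    norm_num
end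

section
/- Let u, v > 0 be real numbers, set R₁ = u²·v² − 4·u²·v − 4·u·v² + 18·u·v − 27, and regard T₁(z) = u·v²·z³ − 2·u·v²·z² + (u·v² + u·v)·z − u·v + 1 as a polynomial over the complex numbers. Then T₁ has a repeated complex root (i.e. there exists z ∈ ℂ with T₁(z) = 0 and T₁′(z) = 0) if and only if R₁ = 0. -/
/-- T₁ has a repeated complex root iff R₁ = 0. -/
theorem kopel_T1_repeated_root_iff
    (u v : ℝ) (hu : 0 < u) (hv : 0 < v) :
    (∃ z : ℂ,
      (u : ℂ) * (v : ℂ) ^ 2 * z ^ 3 - 2 * (u : ℂ) * (v : ℂ) ^ 2 * z ^ 2 +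
        ((u : ℂ) * (v : ℂ) ^ 2 + (u : ℂ) * (v : ℂ)) * z - (u : ℂ) * (v : ℂ) + 1 = 0 ∧
      3 * (u : ℂ) * (v : ℂ) ^ 2 * z ^ 2 - 4 * (u : ℂ) * (v : ℂ) ^ 2 * z +
        ((u : ℂ) * (v : ℂ) ^ 2 + (u : ℂ) * (v : ℂ)) = 0) ↔
    u ^ 2 * v ^ 2 - 4 * u ^ 2 * v - 4 * u * v ^ 2 + 18 * u * v - 27 = 0 := by
  have hu' : (u : ℂ) ≠ 0 := by exact_mod_cast hu.ne'
  have hv' : (v : ℂ) ≠ 0 := by exact_mod_cast hv.ne'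
  constructor
  · rintro ⟨z, h1, h2⟩
    -- D*z + E = 0 where D = -2u²v⁴+6u²v³, E = 9uv²-7u²v³+2u²v⁴
    have h3 : (-2*(u:ℂ)^2*v^4 + 6*u^2*v^3) * z + (9*(u:ℂ)*v^2 - 7*u^2*v^3 + 2*u^2*v^4) = 0 := by
      linear_combination (9*(u:ℂ)*v^2) * h1 - (3*(u:ℂ)*v^2*z - 2*u*v^2) * h2
    -- Q = -9 u³ v⁶ R₁ = 0
    have hQ : (-9 : ℂ) * u^3 * v^6 *
        ((u:ℂ)^2*v^2 - 4*u^2*v - 4*u*v^2 + 18*u*v - 27) = 0 := by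
      linear_combination ((-2*(u:ℂ)^2*v^4 + 6*u^2*v^3)^2) * h2 -
        (3*(u:ℂ)*v^2*((-2*(u:ℂ)^2*v^4 + 6*u^2*v^3)*z - (9*(u:ℂ)*v^2 - 7*u^2*v^3 + 2*u^2*v^4))
          - 4*u*v^2*(-2*(u:ℂ)^2*v^4 + 6*u^2*v^3)) * h3
    have hRc : ((u:ℂ)^2*v^2 - 4*u^2*v - 4*u*v^2 + 18*u*v - 27) = 0 := by
      have h9 : (-9 : ℂ) * u^3 * v^6 ≠ 0 := by
        simp [hu', hv']
      exact (mul_eq_zero.mp hQ).resolve_left h9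
    exact_mod_cast hRc
  · intro hR
    have hRc : ((u:ℂ)^2*v^2 - 4*u^2*v - 4*u*v^2 + 18*u*v - 27) = 0 := by
      exact_mod_cast hR
    by_cases hv3 : v = 3
    · -- then R₁ = -3(u-3)², so u = 3 and the triple root is 2/3
      subst hv3
      have hu3 : u = 3 := by nlinarith [sq_nonneg (u - 3)]
      subst hu3
      refine ⟨2/3, ?_, ?_⟩ <;> norm_num
    · -- z = -E/D with D = -2u²v⁴+6u²v³ ≠ 0
      set Dc : ℂ := -2*(u:ℂ)^2*v^4 + 6*u^2*v^3 with hDdef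
      set Ec : ℂ := 9*(u:ℂ)*v^2 - 7*u^2*v^3 + 2*u^2*v^4 with hEdef
      have hD : Dc ≠ 0 := by
        have h3v : (3 : ℂ) - v ≠ 0 := by
          intro h
          apply hv3
          have hv' : (v : ℂ) = 3 := by linear_combination -h
          exact_mod_cast hv'
        have : Dc = 2*(u:ℂ)^2*v^3*(3 - v) := by ring
        rw [this]
        exact mul_ne_zero (by simp [hu', hv']) h3v
      refine ⟨-Ec / Dc, ?_, ?_⟩
      · have h1 : (-Ec / Dc) * Dc = -Ec := div_mul_cancel₀ _ hD
        have key : Dc^3 * ((u:ℂ) * v ^ 2 * (-Ec/Dc) ^ 3 - 2 * u * v ^ 2 * (-Ec/Dc) ^ 2 +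
            (u * v ^ 2 + u * v) * (-Ec/Dc) - u * v + 1) = 0 := by
          have expand : Dc^3 * ((u:ℂ) * v ^ 2 * (-Ec/Dc) ^ 3 - 2 * u * v ^ 2 * (-Ec/Dc) ^ 2 +
              (u * v ^ 2 + u * v) * (-Ec/Dc) - u * v + 1) =
              (u:ℂ)*v^2 * ((-Ec/Dc)*Dc)^3 - 2*u*v^2*((-Ec/Dc)*Dc)^2*Dc +
              (u*v^2 + u*v)*((-Ec/Dc)*Dc)*Dc^2 + (1 - u*v)*Dc^3 := by ring
          rw [expand, h1]
          linear_combination (2*(u:ℂ)^5*v^10 - 9*u^5*v^9 + 27*u^4*v^8) * hRc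
        have := mul_eq_zero.mp key
        rcases this with h | h
        · exact absurd h (pow_ne_zero 3 hD)
        · exact h
      · have h1 : (-Ec / Dc) * Dc = -Ec := div_mul_cancel₀ _ hD
        have key : Dc^2 * (3 * (u:ℂ) * v ^ 2 * (-Ec/Dc) ^ 2 - 4 * u * v ^ 2 * (-Ec/Dc) +
            (u * v ^ 2 + u * v)) = 0 := by
          have expand : Dc^2 * (3 * (u:ℂ) * v ^ 2 * (-Ec/Dc) ^ 2 - 4 * u * v ^ 2 * (-Ec/Dc) +
              (u * v ^ 2 + u * v)) =
              3*(u:ℂ)*v^2 * ((-Ec/Dc)*Dc)^2 - 4*u*v^2*((-Ec/Dc)*Dc)*Dc +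
              (u*v^2 + u*v)*Dc^2 := by ring
          rw [expand, h1]
          linear_combination (-9*(u:ℂ)^3*v^6) * hRc
        have := mul_eq_zero.mp key
        rcases this with h | h
        · exact absurd h (pow_ne_zero 2 hD)
        · exact h
end
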